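/- arXiv:1604.08106 — 2 statements merged into one kernel-verified Lean document; each statement's English description precedes it below -/
import Mathlib

section
/- Let θ₀ > 0, β* > 0, γ > 0. Then there exists z with 1 < z < 1 + β* θ₀ e^{γ/2} such that z = 1 + β* θ(z) tanh(θ(z)), where θ(z) = θ₀ exp((γ/2)(1 − 1/z)). In other words, the steady-state equation for the pellet temperature always has at least one solution. -/
/-!
The right-hand side `g z = 1 + β* θ(z) tanh θ(z)` is continuous for `z > 0`. Since `θ > 0` and
`0 < x tanh x < x` for `x > 0`, we get `g 1 > 1`; and since `θ(z) ≤ θ₀ e^{γ/2}` for `z > 0`,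
also `g M < M` at `M = 1 + β* θ₀ e^{γ/2}`. The intermediate value theorem applied to `g z - z`
on `[1, M]` gives the steady state.
-/

open Real Set

namespace Real

@[fun_prop]
theorem continuous_tanh : Continuous tanh := by
  simp only [funext tanh_eq_sinh_div_cosh]
  exact continuous_sinh.div continuous_cosh fun x => (cosh_pos x).ne'

theorem tanh_pos {x : ℝ} (hx : 0 < x) : 0 < tanh x := by
  rw [tanh_eq_sinh_div_cosh]
  exact div_pos (sinh_pos_iff.2 hx) (cosh_pos x)

theorem mul_tanh_lt_self {x : ℝ} (hx : 0 < x) : x * tanh x < x :=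
  mul_lt_of_lt_one_right hx (tanh_lt_one x)

end Real

theorem exists_mem_Ioo_eq_of_continuousOn {f : ℝ → ℝ} {a b : ℝ} (hab : a ≤ b)
    (hf : ContinuousOn f (Icc a b)) (ha : a < f a) (hb : f b < b) :
    ∃ z ∈ Ioo a b, f z = z := by
  have hsub : ContinuousOn (fun z => z - f z) (Icc a b) := continuousOn_id.sub hf
  obtain ⟨z, hz, hfz⟩ := intermediate_value_Ioo hab hsub ⟨sub_neg.2 ha, sub_pos.2 hb⟩
  exact ⟨z, hz, (sub_eq_zero.1 hfz).symm⟩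

/-- The modified Thiele modulus at dimensionless pellet temperature `z`. -/
noncomputable def slabTheta (θ₀ γ z : ℝ) : ℝ := θ₀ * exp (γ / 2 * (1 - 1 / z))

section slabTheta

variable {θ₀ γ : ℝ}

theorem slabTheta_pos (hθ₀ : 0 < θ₀) (z : ℝ) : 0 < slabTheta θ₀ γ z :=
  mul_pos hθ₀ (exp_pos _)

theorem slabTheta_le (hθ₀ : 0 ≤ θ₀) (hγ : 0 ≤ γ) {z : ℝ} (hz : 0 < z) :
    slabTheta θ₀ γ z ≤ θ₀ * exp (γ / 2) := by
  have hexponent : γ / 2 * (1 - 1 / z) ≤ γ / 2 := by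
    have : 0 ≤ γ / 2 * (1 / z) := by positivity
    linarith [mul_sub (γ / 2) 1 (1 / z)]
  exact mul_le_mul_of_nonneg_left (exp_le_exp.2 hexponent) hθ₀

theorem continuousOn_slabTheta : ContinuousOn (slabTheta θ₀ γ) (Ioi 0) := by
  unfold slabTheta
  fun_prop (disch := exact fun z hz => ne_of_gt hz)

end slabTheta

/-- Existence of a steady state for the slab pellet: the equation
`z = 1 + β* θ(z) tanh(θ(z))` with `θ(z) = θ₀ exp((γ/2)(1 − 1/z))` always has a
solution with `1 < z < 1 + β* θ₀ e^{γ/2}`. -/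
theorem stmt_10 (θ₀ βstar γ : ℝ) (hθ₀ : 0 < θ₀) (hβ : 0 < βstar) (hγ : 0 < γ) :
    ∃ z : ℝ, 1 < z ∧ z < 1 + βstar * θ₀ * Real.exp (γ / 2) ∧
      z = 1 + βstar * (θ₀ * Real.exp ((γ / 2) * (1 - 1 / z))) *
            Real.tanh (θ₀ * Real.exp ((γ / 2) * (1 - 1 / z))) := by
  set M := 1 + βstar * θ₀ * exp (γ / 2)
  set θ := slabTheta θ₀ γ
  have hθ : ∀ z, 0 < θ z := slabTheta_pos hθ₀
  have hM : 1 ≤ M := le_add_of_nonneg_right (by positivity)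
  have hcont : ContinuousOn (fun z => 1 + βstar * θ z * tanh (θ z)) (Icc 1 M) := by
    have hθc : ContinuousOn θ (Icc 1 M) :=
      continuousOn_slabTheta.mono fun z hz => lt_of_lt_of_le one_pos hz.1
    fun_prop
  have hstart : 1 < 1 + βstar * θ 1 * tanh (θ 1) := by
    have := mul_pos (mul_pos hβ (hθ 1)) (tanh_pos (hθ 1))
    linarith
  have hend : 1 + βstar * θ M * tanh (θ M) < M := by
    have hθM : θ M * tanh (θ M) < θ₀ * exp (γ / 2) :=
      (mul_tanh_lt_self (hθ M)).trans_le (slabTheta_le hθ₀.le hγ.le (by linarith))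
    have := mul_lt_mul_of_pos_left hθM hβ
    simp only [M, mul_assoc] at this ⊢
    linarith
  obtain ⟨z, hz, hfix⟩ := exists_mem_Ioo_eq_of_continuousOn hM hcont hstart hend
  exact ⟨z, hz.1, hz.2, hfix.symm⟩
end

section
/- Let θ₀ > 0, β* > 0, γ > 0 and set Θ = θ₀ e^{γ/2}. If (γ/2)·β*·Θ·(1 + Θ) < 1, then there is exactly one z > 0 satisfying z = 1 + β* θ(z) tanh(θ(z)), where θ(z) = θ₀ exp((γ/2)(1 − 1/z)). -/
/-!
Write `θ(z)` for the Thiele modulus at temperature `z` (`thieleModulus`) and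
`F(z) = 1 + β* θ(z) tanh θ(z)` (`heatBalance`), so that the steady states are the fixed points of `F`.
Since `θ, tanh θ > 0`, every steady state lies in `[1, ∞)`, where `θ ≤ Θ`. There
`F'(z) = β* (tanh θ + θ sech² θ) θ (γ/2) / z² ≤ (γ/2) β* Θ (1 + Θ) < 1`, so `z - F(z)` is strictly
increasing on `[1, ∞)`; it is `≤ 0` at `z = 1` and `≥ 0` at `z = 1 + β* Θ` because `F ≤ 1 + β* Θ`.
-/

open Real Set

namespace Real

theorem tanh_nonneg {x : ℝ} (hx : 0 ≤ x) : 0 ≤ tanh x := by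
  rw [tanh_eq_sinh_div_cosh]
  exact div_nonneg (sinh_nonneg_iff.2 hx) (cosh_pos x).le

theorem hasDerivAt_tanh (x : ℝ) : HasDerivAt tanh (1 / cosh x ^ 2) x := by
  have htanh : tanh = sinh / cosh := funext tanh_eq_sinh_div_cosh
  rw [htanh, ← cosh_sq_sub_sinh_sq x]
  exact ((hasDerivAt_sinh x).div (hasDerivAt_cosh x) (cosh_pos x).ne').congr_deriv (by ring)

theorem hasDerivAt_mul_tanh (x : ℝ) :
    HasDerivAt (fun u => u * tanh u) (tanh x + x / cosh x ^ 2) x :=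
  ((hasDerivAt_id' x).mul (hasDerivAt_tanh x)).congr_deriv (by ring)

theorem tanh_add_div_cosh_sq_nonneg {x : ℝ} (hx : 0 ≤ x) : 0 ≤ tanh x + x / cosh x ^ 2 :=
  add_nonneg (tanh_nonneg hx) (by positivity)

theorem tanh_add_div_cosh_sq_le {x : ℝ} (hx : 0 ≤ x) : tanh x + x / cosh x ^ 2 ≤ 1 + x := by
  have hcosh : 1 ≤ cosh x ^ 2 := one_le_pow₀ (one_le_cosh x)
  gcongr
  · exact (tanh_lt_one x).le
  · exact div_le_self hx hcosh

end Real

theorem existsUnique_fixedPoint_of_hasDerivAt_lt_one {F F' : ℝ → ℝ} {a b : ℝ} (hab : a ≤ b)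
    (hF : ∀ z ∈ Ici a, HasDerivAt F (F' z) z) (hF' : ∀ z ∈ Ioi a, F' z < 1)
    (ha : a ≤ F a) (hb : F b ≤ b) : ∃! z, a ≤ z ∧ F z = z := by
  have hcont : ContinuousOn (fun z => z - F z) (Ici a) := fun z hz =>
    (continuousAt_id.sub (hF z hz).continuousAt).continuousWithinAt
  have hmono : StrictMonoOn (fun z => z - F z) (Ici a) := by
    refine strictMonoOn_of_hasDerivWithinAt_pos (convex_Ici a) hcont
      (fun z hz => ((hasDerivAt_id z).sub (hF z ?_)).hasDerivWithinAt) fun z hz => ?_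
    all_goals rw [interior_Ici] at hz
    · exact mem_Ici.2 hz.le
    · simpa using hF' z hz
  obtain ⟨z, hz, hFz⟩ : ∃ z ∈ Icc a b, z - F z = 0 :=
    intermediate_value_Icc hab (hcont.mono Icc_subset_Ici_self) ⟨by linarith, by linarith⟩
  refine ⟨z, ⟨hz.1, by linarith⟩, fun y ⟨hy, hFy⟩ => hmono.injOn hy hz.1 ?_⟩
  simp only [hFy, hFz, sub_self]

noncomputable def thieleModulus (θ₀ γ z : ℝ) : ℝ := θ₀ * exp ((γ / 2) * (1 - 1 / z))

section thieleModulus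

variable {θ₀ γ z : ℝ}

theorem thieleModulus_pos (hθ₀ : 0 < θ₀) : 0 < thieleModulus θ₀ γ z :=
  mul_pos hθ₀ (exp_pos _)

theorem thieleModulus_le (hθ₀ : 0 ≤ θ₀) (hγ : 0 ≤ γ) (hz : 0 < z) :
    thieleModulus θ₀ γ z ≤ θ₀ * exp (γ / 2) := by
  unfold thieleModulus
  gcongr
  have : 0 < 1 / z := by positivity
  nlinarith

theorem hasDerivAt_thieleModulus (hz : z ≠ 0) :
    HasDerivAt (thieleModulus θ₀ γ) (thieleModulus θ₀ γ z * (γ / 2 / z ^ 2)) z := by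
  have h : HasDerivAt (fun y => (γ / 2) * (1 - 1 / y)) (γ / 2 / z ^ 2) z := by
    simp only [one_div]
    exact (((hasDerivAt_inv hz).const_sub 1).const_mul (γ / 2)).congr_deriv (by ring)
  exact (h.exp.const_mul θ₀).congr_deriv (mul_assoc _ _ _).symm

end thieleModulus

noncomputable def heatBalance (β θ₀ γ z : ℝ) : ℝ :=
  1 + β * (thieleModulus θ₀ γ z * tanh (thieleModulus θ₀ γ z))

section heatBalance

variable {β θ₀ γ z : ℝ}

theorem one_lt_heatBalance (hβ : 0 < β) (hθ₀ : 0 < θ₀) : 1 < heatBalance β θ₀ γ z := by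
  have hθ := thieleModulus_pos (γ := γ) (z := z) hθ₀
  have := mul_pos hβ (mul_pos hθ (tanh_pos hθ))
  unfold heatBalance
  linarith

theorem heatBalance_le (hβ : 0 ≤ β) (hθ₀ : 0 ≤ θ₀) (hγ : 0 ≤ γ) (hz : 0 < z) :
    heatBalance β θ₀ γ z ≤ 1 + β * (θ₀ * exp (γ / 2)) := by
  have hθ : 0 ≤ thieleModulus θ₀ γ z := by unfold thieleModulus; positivity
  have : thieleModulus θ₀ γ z * tanh (thieleModulus θ₀ γ z) ≤ θ₀ * exp (γ / 2) :=
    (mul_le_of_le_one_right hθ (tanh_lt_one _).le).trans (thieleModulus_le hθ₀ hγ hz)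
  exact add_le_add_right (mul_le_mul_of_nonneg_left this hβ) 1

theorem hasDerivAt_heatBalance (hz : z ≠ 0) :
    HasDerivAt (heatBalance β θ₀ γ)
      (β * ((tanh (thieleModulus θ₀ γ z) + thieleModulus θ₀ γ z / cosh (thieleModulus θ₀ γ z) ^ 2) *
        (thieleModulus θ₀ γ z * (γ / 2 / z ^ 2)))) z :=
  (((hasDerivAt_mul_tanh _).comp z (hasDerivAt_thieleModulus hz)).const_mul β).const_add 1

theorem heatBalance_deriv_le (hβ : 0 ≤ β) (hθ₀ : 0 < θ₀) (hγ : 0 ≤ γ) (hz : 1 ≤ z) :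
    β * ((tanh (thieleModulus θ₀ γ z) + thieleModulus θ₀ γ z / cosh (thieleModulus θ₀ γ z) ^ 2) *
        (thieleModulus θ₀ γ z * (γ / 2 / z ^ 2))) ≤
      (γ / 2) * β * (θ₀ * exp (γ / 2)) * (1 + θ₀ * exp (γ / 2)) := by
  have hθ := thieleModulus_pos (γ := γ) (z := z) hθ₀
  have hθΘ := thieleModulus_le hθ₀.le hγ (zero_lt_one.trans_le hz)
  have hz2 : γ / 2 / z ^ 2 ≤ γ / 2 := div_le_self (by positivity) (one_le_pow₀ hz)
  have := tanh_add_div_cosh_sq_nonneg hθ.le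
  calc _ ≤ β * ((1 + θ₀ * exp (γ / 2)) * (θ₀ * exp (γ / 2) * (γ / 2))) := by
        gcongr β * (?_ * (?_ * ?_))
        exact (tanh_add_div_cosh_sq_le hθ.le).trans (add_le_add_right hθΘ 1)
    _ = _ := by ring

end heatBalance

/-- Uniqueness of the steady state under a smallness condition: with
`Θ = θ₀ e^{γ/2}`, if `(γ/2)·β*·Θ·(1 + Θ) < 1` then there is exactly one `z > 0`
satisfying `z = 1 + β* θ(z) tanh(θ(z))`, `θ(z) = θ₀ exp((γ/2)(1 − 1/z))`. -/
theorem stmt_12 (θ₀ βstar γ : ℝ) (hθ₀ : 0 < θ₀) (hβ : 0 < βstar) (hγ : 0 < γ)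
    (hsmall : (γ / 2) * βstar * (θ₀ * Real.exp (γ / 2)) *
        (1 + θ₀ * Real.exp (γ / 2)) < 1) :
    ∃! z : ℝ, 0 < z ∧
      z = 1 + βstar * (θ₀ * Real.exp ((γ / 2) * (1 - 1 / z))) *
            Real.tanh (θ₀ * Real.exp ((γ / 2) * (1 - 1 / z))) := by
  have hsteady : ∀ z, z = 1 + βstar * (θ₀ * Real.exp ((γ / 2) * (1 - 1 / z))) *
      Real.tanh (θ₀ * Real.exp ((γ / 2) * (1 - 1 / z))) ↔ heatBalance βstar θ₀ γ z = z := by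
    intro z
    rw [eq_comm, heatBalance, thieleModulus, mul_assoc]
  obtain ⟨z, ⟨hz, hfix⟩, huniq⟩ :=
    existsUnique_fixedPoint_of_hasDerivAt_lt_one (F := heatBalance βstar θ₀ γ)
      (a := 1) (b := 1 + βstar * (θ₀ * exp (γ / 2))) (le_add_of_nonneg_right (by positivity))
      (fun z hz => hasDerivAt_heatBalance (zero_lt_one.trans_le hz).ne')
      (fun z hz => (heatBalance_deriv_le hβ.le hθ₀ hγ.le (le_of_lt hz)).trans_lt hsmall)
      (one_lt_heatBalance hβ hθ₀).le (heatBalance_le hβ.le hθ₀.le hγ.le (by positivity))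
  refine ⟨z, ⟨by linarith, (hsteady z).2 hfix⟩, fun y ⟨_, hy⟩ => huniq y ⟨?_, (hsteady y).1 hy⟩⟩
  rw [← (hsteady y).1 hy]
  exact (one_lt_heatBalance hβ hθ₀).le
end
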